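/- arXiv:1209.0634 — 2 statements merged into one kernel-verified Lean document; each statement's English description precedes it below -/
import Mathlib

section
/- Let x, y be hyperbolic isometries of the hyperbolic plane whose axes intersect at a point P. Let Q be the point on the axis of x at distance τ_x/2 from P in the positive direction, and R the point on the axis of y at distance τ_y/2 from P in the negative direction, where τ_x, τ_y denote translation lengths. Then the axis of xy is the oriented geodesic from R to Q, and the translation length of xy equals twice the hyperbolic distance from R to Q. -/
open UpperHalfPlane Matrix MatrixGroups Metric Filter

noncomputable section

namespace HypAux

/-- standard vertical geodesic -/
def c (t : ℝ) : ℍ := UpperHalfPlane.mk ⟨0, Real.exp t⟩ (Real.exp_pos t)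

lemma c_im (t : ℝ) : (c t).im = Real.exp t := rfl
lemma c_re (t : ℝ) : (c t).re = 0 := rfl
lemma c_coe' (t : ℝ) : (c t : ℂ) = (Real.exp t : ℝ) * Complex.I := by
  rw [show (c t : ℂ) = ⟨0, Real.exp t⟩ from rfl, Complex.ext_iff]
  constructor <;> simp [-Complex.ofReal_exp]

lemma isometry_c : Isometry c := UpperHalfPlane.isometry_vertical_line 0

lemma denom_ne (g : SL(2,ℝ)) (z : ℍ) : ((g 1 0 : ℝ) : ℂ) * z + ((g 1 1 : ℝ) : ℂ) ≠ 0 := by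
  intro h
  rcases eq_or_ne (g 1 0) 0 with h0 | h0
  · have hdet : g 0 0 * g 1 1 - g 0 1 * g 1 0 = 1 := by
      have := g.2; rwa [Matrix.det_fin_two] at this
    rw [h0] at hdet
    have h11 : g 1 1 ≠ 0 := by intro hh; rw [hh] at hdet; simp at hdet
    rw [h0] at h
    simp at h
    exact h11 (by exact_mod_cast h)
  · have him := congrArg Complex.im h
    simp at him
    rcases him with h|h
    · exact h0 h
    · exact (ne_of_gt z.im_pos) h

lemma smul_eq_iff (g : SL(2,ℝ)) (z w : ℍ) :
    g • z = w ↔ ((g 0 0 : ℝ) : ℂ) * z + ((g 0 1 : ℝ) : ℂ)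
      = (w : ℂ) * (((g 1 0 : ℝ) : ℂ) * z + ((g 1 1 : ℝ) : ℂ)) := by
  rw [UpperHalfPlane.specialLinearGroup_apply]
  simp only [Algebra.algebraMap_self_apply]
  constructor
  · intro h
    have := congrArg (UpperHalfPlane.coe) h
    rw [UpperHalfPlane.coe_mk] at this
    rw [div_eq_iff (denom_ne g z)] at this
    linear_combination this
  · intro h
    ext
    rw [UpperHalfPlane.coe_mk, div_eq_iff (denom_ne g z)]
    linear_combination h

lemma neg_apply (g : SL(2,ℝ)) (i j : Fin 2) : (-g) i j = -(g i j) := by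
  simp [Matrix.SpecialLinearGroup.coe_neg]

lemma neg_smul' (g : SL(2,ℝ)) (z : ℍ) : (-g) • z = g • z := by
  rw [smul_eq_iff]
  have h := (smul_eq_iff g z (g • z)).mp rfl
  simp only [neg_apply]
  push_cast
  linear_combination -h

/-! ### the standard translation and half-turn matrices -/

def Tm (s : ℝ) : SL(2,ℝ) :=
  ⟨!![Real.exp (s/2), 0; 0, Real.exp (-(s/2))], by
    simp [Matrix.det_fin_two_of, ← Real.exp_add]⟩

def Wm : SL(2,ℝ) := ⟨!![0,-1;1,0], by simp [Matrix.det_fin_two_of]⟩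

lemma Tm_mul (s t : ℝ) : Tm s * Tm t = Tm (s+t) := by
  ext i j
  simp only [Matrix.SpecialLinearGroup.coe_mul, Matrix.SpecialLinearGroup.coe_neg]
  fin_cases i <;> fin_cases j <;>
    simp [Tm, Matrix.mul_apply, Fin.sum_univ_two, ← Real.exp_add] <;> ring_nf

lemma Tm_zero : Tm 0 = 1 := by
  ext i j
  fin_cases i <;> fin_cases j <;> simp [Tm]

lemma Tm_inv (s : ℝ) : (Tm s)⁻¹ = Tm (-s) := by
  apply inv_eq_of_mul_eq_one_right
  rw [Tm_mul, add_neg_cancel, Tm_zero]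

lemma Wm_sq : Wm * Wm = -1 := by
  ext i j
  simp only [Matrix.SpecialLinearGroup.coe_mul, Matrix.SpecialLinearGroup.coe_neg]
  fin_cases i <;> fin_cases j <;>
    simp [Wm, Matrix.mul_apply, Fin.sum_univ_two]

lemma WTW (a : ℝ) : Wm * Tm a * Wm = -(Tm (-a)) := by
  ext i j
  simp only [Matrix.SpecialLinearGroup.coe_mul, Matrix.SpecialLinearGroup.coe_neg]
  fin_cases i <;> fin_cases j <;>
    simp [Wm, Tm, Matrix.mul_apply, Fin.sum_univ_two, neg_div]

lemma Tm_smul (s t : ℝ) : Tm s • c t = c (t + s) := by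
  rw [smul_eq_iff, c_coe', c_coe']
  simp [Tm, -Complex.ofReal_exp]
  rw [Complex.ext_iff]
  constructor <;> simp [-Complex.ofReal_exp, ← Real.exp_add] <;> ring_nf

lemma Wm_smul (t : ℝ) : Wm • c t = c (-t) := by
  rw [smul_eq_iff, c_coe', c_coe']
  simp [Wm, -Complex.ofReal_exp]
  rw [Complex.ext_iff]
  constructor <;> simp [-Complex.ofReal_exp, ← Real.exp_add]

def rho (u : ℝ) : SL(2,ℝ) := Tm u * Wm * Tm (-u)

lemma rho_smul (u t : ℝ) : rho u • c t = c (2*u - t) := by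
  rw [rho, mul_smul, mul_smul, Tm_smul, Wm_smul, Tm_smul]
  congr 1
  ring

lemma rho_sq (u : ℝ) : rho u * rho u = -1 := by
  rw [rho]
  have h1 : Tm (-u) * (Tm u * Wm * Tm (-u)) = Wm * Tm (-u) := by
    rw [← mul_assoc, ← mul_assoc, Tm_mul, neg_add_cancel, Tm_zero, one_mul]
  calc Tm u * Wm * Tm (-u) * (Tm u * Wm * Tm (-u))
      = Tm u * Wm * (Tm (-u) * (Tm u * Wm * Tm (-u))) := by group
    _ = Tm u * Wm * (Wm * Tm (-u)) := by rw [h1]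
    _ = Tm u * (Wm * Wm) * Tm (-u) := by group
    _ = Tm u * (-1) * Tm (-u) := by rw [Wm_sq]
    _ = -(Tm u * Tm (-u)) := by rw [mul_neg_one, neg_mul]
    _ = -1 := by rw [Tm_mul, add_neg_cancel, Tm_zero]

lemma rho_Wm (s : ℝ) : rho s * Wm = -(Tm (2*s)) := by
  rw [rho, mul_assoc, mul_assoc, ← mul_assoc Wm, WTW]
  rw [show (-(-s) : ℝ) = s from neg_neg s, mul_neg, Tm_mul]
  congr 1
  ring_nf

lemma Wm_rho (u : ℝ) : Wm * rho (-u) = -(Tm (2*u)) := by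
  rw [rho, neg_neg, ← mul_assoc, ← mul_assoc, WTW, neg_mul, Tm_mul]
  congr 2
  ring

/-! ### stabilizer facts -/

lemma stab (k : SL(2,ℝ)) (h : k • c 0 = c 0) : k 0 1 = -(k 1 0) ∧ k 0 0 = k 1 1 := by
  have e := (smul_eq_iff k (c 0) (c 0)).mp h
  rw [c_coe'] at e
  simp [-Complex.ofReal_exp, Real.exp_zero] at e
  have r := congrArg Complex.re e
  have i := congrArg Complex.im e
  simp [-Complex.ofReal_exp] at r i
  constructor <;> linarith

lemma fix (g : SL(2,ℝ)) (h0 : g • c 0 = c 0) (h1 : g • c 1 = c 1) :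
    ∀ z : ℍ, g • z = z := by
  obtain ⟨hb, ha⟩ := stab g h0
  have e := (smul_eq_iff g (c 1) (c 1)).mp h1
  rw [c_coe'] at e
  have r := congrArg Complex.re e
  simp [-Complex.ofReal_exp] at r
  have h10 : g 1 0 = 0 := by
    have he : (1:ℝ) < Real.exp 1 := by
      have := Real.exp_lt_exp.mpr (show (0:ℝ) < 1 by norm_num)
      simpa using this
    have h2 : g 1 0 * (1 - Real.exp 1 * Real.exp 1) = 0 := by linear_combination hb - r
    rcases mul_eq_zero.mp h2 with h|h
    · exact h
    · nlinarith
  have h01 : g 0 1 = 0 := by rw [hb, h10]; ring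
  intro z
  rw [smul_eq_iff, h10, h01, ha]
  push_cast
  ring

lemma commW (k : SL(2,ℝ)) (h : k • c 0 = c 0) : Wm * k = k * Wm := by
  obtain ⟨hb, ha⟩ := stab k h
  apply Subtype.ext
  rw [Matrix.SpecialLinearGroup.coe_mul, Matrix.SpecialLinearGroup.coe_mul]
  ext i j
  fin_cases i <;> fin_cases j <;>
    simp [Wm, Matrix.mul_apply, Fin.sum_univ_two, hb, ha]

/-- a half-turn fixing `c a` reflects the standard geodesic around `a` -/
lemma half (h : SL(2,ℝ)) (a : ℝ) (hfix : h • c a = c a) (hsq : h * h = -1) :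
    ∀ t, h • c t = c (2*a - t) := by
  set k : SL(2,ℝ) := Tm (-a) * h * Tm a with hk
  have hrec : h = Tm a * k * Tm (-a) := by
    rw [hk]
    rw [show (Tm a * (Tm (-a) * h * Tm a) * Tm (-a) : SL(2,ℝ))
      = (Tm a * Tm (-a)) * h * (Tm a * Tm (-a)) by group]
    rw [Tm_mul, add_neg_cancel, Tm_zero, one_mul, mul_one]
  have hk0 : k • c 0 = c 0 := by
    rw [hk, mul_smul, mul_smul, Tm_smul, show (0:ℝ) + a = a by ring, hfix, Tm_smul]
    congr 1; ring
  have hk2 : k * k = -1 := by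
    rw [hk]
    rw [show (Tm (-a) * h * Tm a * (Tm (-a) * h * Tm a) : SL(2,ℝ))
      = Tm (-a) * h * (Tm a * Tm (-a)) * h * Tm a by group]
    rw [Tm_mul, add_neg_cancel, Tm_zero, mul_one, mul_assoc, mul_assoc,
      show (h * (h * Tm a) : SL(2,ℝ)) = (h * h) * Tm a by group, hsq]
    rw [show (Tm (-a) * (-1 * Tm a) : SL(2,ℝ)) = -(Tm (-a) * Tm a) by
      rw [neg_one_mul, mul_neg]]
    rw [Tm_mul, neg_add_cancel, Tm_zero]
  obtain ⟨hkb, hka⟩ := stab k hk0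
  -- entries of k*k = -1
  have hdet : k 0 0 * k 1 1 - k 0 1 * k 1 0 = 1 := by
    have := k.2; rwa [Matrix.det_fin_two] at this
  have he00 : k 0 0 * k 0 0 + k 0 1 * k 1 0 = -1 := by
    have h3 := congrArg (fun m : SL(2,ℝ) => m 0 0) hk2
    simp only [Matrix.SpecialLinearGroup.coe_mul] at h3
    rw [show ((k : Matrix (Fin 2) (Fin 2) ℝ) * (k : Matrix (Fin 2) (Fin 2) ℝ)) 0 0
      = k 0 0 * k 0 0 + k 0 1 * k 1 0 from by
        rw [Matrix.mul_apply, Fin.sum_univ_two]] at h3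
    rw [h3, neg_apply]
    norm_num
  have hk00 : k 0 0 = 0 := by
    rw [← hka] at hdet
    have h2 : k 0 0 * k 0 0 = 0 := by linarith [hdet, he00]
    exact (mul_self_eq_zero).mp h2
  have hk11 : k 1 1 = 0 := by rw [← hka, hk00]
  have hkct : ∀ t, k • c t = c (-t) := by
    intro t
    rw [smul_eq_iff, c_coe', c_coe', hk00, hk11, hkb]
    have heeC : ((Real.exp (-t) : ℝ):ℂ) * ((Real.exp t : ℝ):ℂ) = 1 := by
      rw [show ((Real.exp (-t) : ℝ):ℂ) * ((Real.exp t : ℝ):ℂ)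
          = ((Real.exp (-t) * Real.exp t : ℝ):ℂ) by push_cast [-Complex.ofReal_exp]; ring]
      rw [← Real.exp_add, neg_add_cancel, Real.exp_zero]
      norm_num
    push_cast [-Complex.ofReal_exp]
    linear_combination (-(((k 1 0 : ℝ):ℂ) * ((Real.exp (-t) : ℝ):ℂ) * ((Real.exp t : ℝ):ℂ)))
        * Complex.I_sq + ((k 1 0 : ℝ):ℂ) * heeC
  intro t
  rw [hrec, mul_smul, mul_smul, Tm_smul, hkct, Tm_smul]
  congr 1
  ring

/-! ### transitivity -/

lemma exists_to_i (z : ℍ) : ∃ A : SL(2,ℝ), A • z = c 0 := by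
  have hy := z.im_pos
  have hs : (0:ℝ) < Real.sqrt z.im := Real.sqrt_pos.mpr hy
  have hss : Real.sqrt z.im * Real.sqrt z.im = z.im := Real.mul_self_sqrt hy.le
  refine ⟨⟨!![1/Real.sqrt z.im, -(z.re/Real.sqrt z.im); 0, Real.sqrt z.im], by
    simp [Matrix.det_fin_two_of]
    field_simp⟩, ?_⟩
  refine (smul_eq_iff _ _ _).mpr ?_
  rw [c_coe']
  simp [-Complex.ofReal_exp, Real.exp_zero]
  rw [Complex.ext_iff]
  constructor <;> simp [-Complex.ofReal_exp] <;> field_simp <;> nlinarith [hss]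

lemma cosh_dist_c (z : ℍ) (s : ℝ) :
    Real.cosh (dist z (c s)) =
      (z.re^2 + z.im^2 + (Real.exp s)^2) / (2 * z.im * Real.exp s) := by
  rw [UpperHalfPlane.cosh_dist, Complex.dist_eq, Complex.sq_norm, Complex.normSq_apply]
  have h1 : ((z:ℂ) - (c s:ℂ)).re = z.re := by
    simp [c_re, Complex.sub_re]
  have h2 : ((z:ℂ) - (c s:ℂ)).im = z.im - Real.exp s := by
    simp [c_im, Complex.sub_im]
  rw [h1, h2, c_im]
  have := z.im_pos
  have := Real.exp_pos s
  field_simp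
  ring

lemma exists_rot (w : ℍ) (r : ℝ) (hd : dist w (c 0) = r) :
    ∃ k : SL(2,ℝ), k • c 0 = c 0 ∧ k • w = c r := by
  by_cases hw : w = c r
  · exact ⟨1, one_smul _ _, by rw [one_smul, hw]⟩
  set s := Real.exp r with hs
  have hsp : 0 < s := Real.exp_pos r
  set x := w.re; set y := w.im
  have hy : 0 < y := w.im_pos
  have key : s * (x^2 + y^2 + 1) = y * (1 + s^2) := by
    have k1 := congrArg Real.cosh hd
    rw [cosh_dist_c, Real.cosh_eq, Real.exp_zero] at k1
    rw [Real.exp_neg] at k1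
    field_simp at k1
    nlinarith [k1]
  set u : ℂ := 1 + (s:ℝ) * Complex.I * (w:ℂ) with hu
  set v : ℂ := (w:ℂ) - (s:ℝ) * Complex.I with hv
  have hvne : v ≠ 0 := by
    intro h
    apply hw
    apply UpperHalfPlane.ext
    rw [c_coe']
    rw [sub_eq_zero] at h
    exact h
  have him : (u/v).im = 0 := by
    rw [Complex.div_im]
    have hure : u.re = 1 - s*y := by simp [hu]; ring
    have huim : u.im = s*x := by simp [hu, x]
    have hvre : v.re = x := by simp [hv, x]
    have hvim : v.im = y - s := by simp [hv, y]
    rw [hure, huim, hvre, hvim]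
    rw [div_sub_div_same, div_eq_zero_iff]
    left
    nlinarith [key]
  set l : ℝ := (-(u/v)).re with hl
  have hlv : (l:ℂ) * v = -u := by
    have h2 : ((-(u/v)).re : ℂ) = -(u/v) := by
      rw [Complex.ext_iff]
      constructor
      · simp
      · simp [him]
    rw [← hl] at h2
    rw [h2]
    field_simp
  set n : ℝ := Real.sqrt (l^2+1) with hn
  have hnp : 0 < n := Real.sqrt_pos.mpr (by positivity)
  have hnn : n^2 = l^2+1 := Real.sq_sqrt (by positivity)
  refine ⟨⟨!![l/n, 1/n; -(1/n), l/n], by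
    rw [Matrix.det_fin_two_of]
    field_simp
    linarith [hnn]⟩, ?_, ?_⟩
  · refine (smul_eq_iff _ _ _).mpr ?_
    rw [c_coe']
    simp [-Complex.ofReal_exp, Real.exp_zero]
    push_cast
    linear_combination ((n:ℂ)⁻¹) * Complex.I_sq
  · refine (smul_eq_iff _ _ _).mpr ?_
    rw [c_coe']
    simp [-Complex.ofReal_exp]
    push_cast [-Complex.ofReal_exp]
    linear_combination ((n:ℂ))⁻¹ * hlv

lemma exists_pair (z w : ℍ) :
    ∃ C : SL(2,ℝ), C • z = c 0 ∧ C • w = c (dist z w) := by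
  obtain ⟨A, hA⟩ := exists_to_i z
  have hdw : dist (A • w) (c 0) = dist z w := by
    rw [← hA, dist_smul, dist_comm]
  obtain ⟨k, hk0, hkw⟩ := exists_rot (A • w) (dist z w) hdw
  refine ⟨k * A, ?_, ?_⟩
  · rw [mul_smul, hA, hk0]
  · rw [mul_smul, hkw]

/-- two-sphere intersection uniqueness along the standard geodesic -/
lemma L1 (z : ℍ) (t s₁ s₂ : ℝ) (hne : s₁ ≠ s₂)
    (h1 : dist z (c s₁) = |t - s₁|) (h2 : dist z (c s₂) = |t - s₂|) : z = c t := by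
  have k1 := congrArg Real.cosh h1
  have k2 := congrArg Real.cosh h2
  rw [cosh_dist_c, Real.cosh_abs, Real.cosh_eq] at k1 k2
  set x := z.re
  set y := z.im
  have hy : 0 < y := z.im_pos
  have e1p := Real.exp_pos s₁
  have e2p := Real.exp_pos s₂
  have etp := Real.exp_pos t
  simp only [neg_sub, Real.exp_sub] at k1 k2
  field_simp at k1 k2
  have q1 := mul_left_cancel₀ (show (2*Real.exp s₁:ℝ) ≠ 0 by positivity)
    (show 2*Real.exp s₁ * ((x^2 + y^2 + (Real.exp s₁)^2) * Real.exp t)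
        = 2*Real.exp s₁ * (((Real.exp t)^2 + (Real.exp s₁)^2) * y) by linear_combination 2*Real.exp s₁ * k1)
  have q2 := mul_left_cancel₀ (show (2*Real.exp s₂:ℝ) ≠ 0 by positivity)
    (show 2*Real.exp s₂ * ((x^2 + y^2 + (Real.exp s₂)^2) * Real.exp t)
        = 2*Real.exp s₂ * (((Real.exp t)^2 + (Real.exp s₂)^2) * y) by linear_combination 2*Real.exp s₂ * k2)
  have hb : Real.exp s₁ ≠ Real.exp s₂ := fun h => hne (Real.exp_eq_exp.mp h)
  have hya : y = Real.exp t := by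
    have hz : (Real.exp t - y) * ((Real.exp s₁)^2 - (Real.exp s₂)^2) = 0 := by
      linear_combination q1 - q2
    rcases mul_eq_zero.mp hz with h | h
    · linarith
    · exfalso
      have hz2 : (Real.exp s₁ - Real.exp s₂) * (Real.exp s₁ + Real.exp s₂) = 0 := by
        linear_combination h
      rcases mul_eq_zero.mp hz2 with h' | h'
      · exact hb (by linarith)
      · linarith
  have hx : x = 0 := by
    have hxx : x^2 * Real.exp t = 0 := by
      rw [hya] at q1
      linear_combination q1
    have := (mul_eq_zero.mp hxx).resolve_right (ne_of_gt etp)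
    exact pow_eq_zero_iff (n := 2) (by norm_num) |>.mp this
  exact UpperHalfPlane.ext' hx hya

/-- every unit-speed line in `ℍ` is equivalent to the standard geodesic -/
lemma geo (f : ℝ → ℍ) (hf : Isometry f) : ∃ A : SL(2,ℝ), ∀ t, A • f t = c t := by
  obtain ⟨A, hA0, hA1⟩ := exists_pair (f 0) (f 1)
  have hd01 : dist (f 0) (f 1) = 1 := by
    rw [hf.dist_eq, Real.dist_eq]; norm_num
  rw [hd01] at hA1
  refine ⟨A, fun t => ?_⟩
  apply L1 (A • f t) t 0 1 (by norm_num)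
  · rw [← hA0, dist_smul, hf.dist_eq, Real.dist_eq, sub_zero]
  · rw [← hA1, dist_smul, hf.dist_eq, Real.dist_eq]

/-- if `g` translates an axis conjugated to the standard one, it acts as the conjugated
standard translation everywhere -/
lemma trans_conj (g : SL(2,ℝ)) (f : ℝ → ℍ) (τ : ℝ) (A : SL(2,ℝ))
    (hA : ∀ t, A • f t = c t) (hax : ∀ t, g • f t = f (t + τ)) :
    ∀ z : ℍ, g • z = (A⁻¹ * Tm τ * A) • z := by
  have hAf : ∀ t, A⁻¹ • c t = f t := fun t => by rw [← hA t, inv_smul_smul]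
  have hD : ∀ z : ℍ, (Tm (-τ) * A * g * A⁻¹) • z = z := by
    apply fix
    all_goals
      rw [mul_smul, mul_smul, mul_smul, hAf, hax, hA, Tm_smul]
      congr 1
      ring
  intro z
  have h := hD (A • z)
  rw [mul_smul, mul_smul, mul_smul, inv_smul_smul] at h
  have h2 := congrArg (fun w => (Tm τ) • w) h
  rw [← mul_smul, Tm_mul, add_neg_cancel, Tm_zero, one_smul] at h2
  rw [mul_smul, mul_smul, ← h2, inv_smul_smul]

end HypAux

open HypAux

/-- `f` is a unit-speed parametrization of an (oriented) axis of `g`, along which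
`g` translates by `τ`. -/
def IsHypAxis (g : SL(2,ℝ)) (f : ℝ → ℍ) (τ : ℝ) : Prop :=
  Isometry f ∧ 0 < τ ∧ ∀ t : ℝ, g • f t = f (t + τ)

/-- If the axes of the hyperbolic isometries `x` and `y` intersect at `P = fx 0 = fy 0`,
then with `Q` the point at distance `τx/2` from `P` in the positive direction of the axis of
`x` and `R` the point at distance `τy/2` from `P` in the negative direction of the axis of `y`,
the axis of `x*y` is the oriented geodesic from `R` to `Q`, and the translation length of
`x*y` is twice the distance from `R` to `Q`. -/
theorem stmt1 (x y : SL(2,ℝ)) (fx fy : ℝ → ℍ) (τx τy : ℝ)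
    (hx : IsHypAxis x fx τx) (hy : IsHypAxis y fy τy)
    (hP : fx 0 = fy 0) :
    ∃ f : ℝ → ℍ, Isometry f ∧ f 0 = fy (-(τy / 2)) ∧
      f (dist (fy (-(τy / 2))) (fx (τx / 2))) = fx (τx / 2) ∧
      ∀ t : ℝ, (x * y) • f t = f (t + 2 * dist (fy (-(τy / 2))) (fx (τx / 2))) := by
  obtain ⟨hfx, hτx, hgx⟩ := hx
  obtain ⟨hfy, hτy, hgy⟩ := hy
  obtain ⟨A, hA⟩ := geo fx hfx
  obtain ⟨B, hB⟩ := geo fy hfy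
  set R := fy (-(τy / 2)) with hR
  set Q := fx (τx / 2) with hQ
  set d := dist R Q with hd
  obtain ⟨C, hCR, hCQ⟩ := exists_pair R Q
  refine ⟨fun t => C⁻¹ • c t, ?_, ?_, ?_, ?_⟩
  · exact (isometry_smul ℍ C⁻¹).comp isometry_c
  · show C⁻¹ • c 0 = R
    rw [← hCR, inv_smul_smul]
  · show C⁻¹ • c (dist R Q) = Q
    rw [← hCQ, inv_smul_smul]
  · -- main computation
    intro t
    have hx' := trans_conj x fx τx A hA hgx
    have hy' := trans_conj y fy τy B hB hgy
    -- K stabilizes c 0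
    have hK : (A * B⁻¹) • c 0 = c 0 := by
      rw [mul_smul, show B⁻¹ • c 0 = fy 0 from by rw [← hB 0, inv_smul_smul],
        ← hP, hA]
    have hWK := commW (A * B⁻¹) hK
    -- the matrix-level cancellation
    have hWKW : Wm * A * B⁻¹ * Wm = -(A * B⁻¹) := by
      calc Wm * A * B⁻¹ * Wm = (Wm * (A * B⁻¹)) * Wm := by group
        _ = ((A * B⁻¹) * Wm) * Wm := by rw [hWK]
        _ = (A * B⁻¹) * (Wm * Wm) := by group
        _ = (A * B⁻¹) * (-1) := by rw [Wm_sq]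
        _ = -(A * B⁻¹) := by rw [mul_neg_one]
    -- half-turn factorizations
    set G₁ : SL(2,ℝ) := A⁻¹ * rho (τx/2) * A with hG₁
    set G₂ : SL(2,ℝ) := B⁻¹ * rho (-(τy/2)) * B with hG₂
    -- G₁, G₂ facts
    have hG₁Q : G₁ • Q = Q := by
      rw [hG₁, mul_smul, mul_smul, hA, rho_smul,
        show 2*(τx/2) - τx/2 = τx/2 by ring, ← hA (τx/2), inv_smul_smul]
    have hG₂R : G₂ • R = R := by
      rw [hG₂, mul_smul, mul_smul, hB, rho_smul,
        show 2*(-(τy/2)) - (-(τy/2)) = -(τy/2) by ring, ← hB (-(τy/2)), inv_smul_smul]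
    have hG₁2 : G₁ * G₁ = -1 := by
      rw [hG₁]
      calc A⁻¹ * rho (τx/2) * A * (A⁻¹ * rho (τx/2) * A)
          = A⁻¹ * (rho (τx/2) * rho (τx/2)) * A := by group
        _ = A⁻¹ * (-1) * A := by rw [rho_sq]
        _ = -1 := by rw [mul_neg_one, neg_mul, inv_mul_cancel]
    have hG₂2 : G₂ * G₂ = -1 := by
      rw [hG₂]
      calc B⁻¹ * rho (-(τy/2)) * B * (B⁻¹ * rho (-(τy/2)) * B)
          = B⁻¹ * (rho (-(τy/2)) * rho (-(τy/2))) * B := by group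
        _ = B⁻¹ * (-1) * B := by rw [rho_sq]
        _ = -1 := by rw [mul_neg_one, neg_mul, inv_mul_cancel]
    have hCQd : C⁻¹ • c d = Q := by rw [hd, ← hCQ, inv_smul_smul]
    have hCRd : C⁻¹ • c 0 = R := by rw [← hCR, inv_smul_smul]
    have hH₁ : ∀ u, (C * G₁ * C⁻¹) • c u = c (2*d - u) := by
      apply half
      · rw [mul_smul, mul_smul, hCQd, hG₁Q, ← hCQd, smul_inv_smul]
      · calc (C * G₁ * C⁻¹) * (C * G₁ * C⁻¹) = C * (G₁ * G₁) * C⁻¹ := by group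
          _ = C * (-1) * C⁻¹ := by rw [hG₁2]
          _ = -1 := by rw [mul_neg_one, neg_mul, mul_inv_cancel]
    have hH₂ : ∀ u, (C * G₂ * C⁻¹) • c u = c (2*0 - u) := by
      apply half
      · rw [mul_smul, mul_smul, hCRd, hG₂R, ← hCRd, smul_inv_smul]
      · calc (C * G₂ * C⁻¹) * (C * G₂ * C⁻¹) = C * (G₂ * G₂) * C⁻¹ := by group
          _ = C * (-1) * C⁻¹ := by rw [hG₂2]
          _ = -1 := by rw [mul_neg_one, neg_mul, mul_inv_cancel]
    -- translation matrices as products of half turns, action level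
    have hTx : ∀ z : ℍ, Tm τx • z = rho (τx/2) • Wm • z := by
      intro z
      have hfac : rho (τx/2) * Wm = -(Tm τx) := by
        rw [rho_Wm, show 2*(τx/2) = τx by ring]
      rw [← mul_smul, hfac, neg_smul']
    have hTy : ∀ z : ℍ, Tm τy • z = Wm • rho (-(τy/2)) • z := by
      intro z
      have hfac : Wm * rho (-(τy/2)) = -(Tm τy) := by
        rw [Wm_rho, show 2*(τy/2) = τy by ring]
      rw [← mul_smul, hfac, neg_smul']
    have key : ∀ u : ℍ, Wm • A • B⁻¹ • Wm • u = A • B⁻¹ • u := by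
      intro u
      rw [← mul_smul, ← mul_smul, ← mul_smul, hWKW, neg_smul', mul_smul]
    have conj_smul : ∀ (g : SL(2,ℝ)) (w : ℍ),
        g • (C⁻¹ • w) = C⁻¹ • ((C * g * C⁻¹) • w) := by
      intro g w
      rw [← mul_smul, ← mul_smul]
      congr 1
      group
    show (x * y) • (C⁻¹ • c t) = C⁻¹ • c (t + 2 * d)
    calc (x * y) • (C⁻¹ • c t)
        = x • (y • (C⁻¹ • c t)) := by rw [mul_smul]
      _ = x • ((B⁻¹ * Tm τy * B) • (C⁻¹ • c t)) := by rw [hy']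
      _ = x • (B⁻¹ • Tm τy • B • (C⁻¹ • c t)) := by rw [mul_smul, mul_smul]
      _ = x • (B⁻¹ • Wm • rho (-(τy/2)) • B • (C⁻¹ • c t)) := by rw [hTy]
      _ = (A⁻¹ * Tm τx * A) • (B⁻¹ • Wm • rho (-(τy/2)) • B • (C⁻¹ • c t)) := by
          rw [hx']
      _ = A⁻¹ • Tm τx • A • (B⁻¹ • Wm • rho (-(τy/2)) • B • (C⁻¹ • c t)) := by
          rw [mul_smul, mul_smul]
      _ = A⁻¹ • rho (τx/2) • Wm • A • B⁻¹ • Wm • rho (-(τy/2)) • B • (C⁻¹ • c t) := by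
          rw [hTx]
      _ = A⁻¹ • rho (τx/2) • A • B⁻¹ • rho (-(τy/2)) • B • (C⁻¹ • c t) := by
          rw [key]
      _ = G₁ • (G₂ • (C⁻¹ • c t)) := by
          rw [hG₁, hG₂, mul_smul, mul_smul, mul_smul, mul_smul]
      _ = G₁ • (C⁻¹ • ((C * G₂ * C⁻¹) • c t)) := by rw [conj_smul]
      _ = G₁ • (C⁻¹ • c (2*0 - t)) := by rw [hH₂]
      _ = C⁻¹ • ((C * G₁ * C⁻¹) • c (2*0 - t)) := by rw [conj_smul]
      _ = C⁻¹ • c (2*d - (2*0 - t)) := by rw [hH₁]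
      _ = C⁻¹ • c (t + 2 * d) := by norm_num; ring_nf
end
end

section
/- Every geodesic triangle in the hyperbolic plane is ln(1+√2)-thin: each side is contained in the closed ln(1+√2)-neighborhood of the union of the other two sides. -/
open UpperHalfPlane Metric

noncomputable section

/-- The geodesic segment between two points of the hyperbolic plane (which is uniquely
geodesic): the set of points through which the distance from `a` to `b` is achieved. -/
def Seg (a b : ℍ) : Set ℍ := {z | dist a z + dist z b = dist a b}

namespace ThinAux

open Real

lemma delta_eq : Real.log (1 + √2) = Real.arsinh 1 := by rw [Real.arsinh]; norm_num

lemma delta_nonneg : 0 ≤ Real.log (1 + √2) :=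
  Real.log_nonneg (by nlinarith [Real.sqrt_nonneg 2])

lemma dist_eq_of_cosh_eq {z w : ℍ} {d : ℝ} (hd : 0 ≤ d)
    (h : Real.cosh (dist z w) = Real.cosh d) : dist z w = d :=
  Real.cosh_strictMonoOn.injOn dist_nonneg hd h

lemma dist_eq_dist_of_cosh {z w z' w' : ℍ}
    (h : Real.cosh (dist z w) = Real.cosh (dist z' w')) : dist z w = dist z' w' :=
  dist_eq_of_cosh_eq dist_nonneg h

lemma seg_comm (a b : ℍ) : Seg a b = Seg b a := by
  ext z
  simp only [Seg, Set.mem_setOf_eq, UpperHalfPlane.dist_comm a z, UpperHalfPlane.dist_comm z b,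
    UpperHalfPlane.dist_comm a b]
  constructor <;> intro h <;> linarith

lemma left_mem_seg (a b : ℍ) : a ∈ Seg a b := by simp [Seg]

lemma right_mem_seg (a b : ℍ) : b ∈ Seg a b := by simp [Seg]

lemma seg_trans {b c w₀ w : ℍ} (h0 : w₀ ∈ Seg b c) (h : w ∈ Seg b w₀) : w ∈ Seg b c := by
  simp only [Seg, Set.mem_setOf_eq] at *
  have t1 := UpperHalfPlane.dist_triangle w w₀ c
  have t2 := UpperHalfPlane.dist_triangle b w c
  linarith

lemma seg_map {f : ℍ → ℍ} (hf : ∀ z w, dist (f z) (f w) = dist z w) {a b w : ℍ}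
    (h : w ∈ Seg a b) : f w ∈ Seg (f a) (f b) := by
  simpa only [Seg, Set.mem_setOf_eq, hf] using h

/-! ### Explicit isometries -/

def V (x y : ℝ) (hy : 0 < y) : ℍ := UpperHalfPlane.mk ⟨x, y⟩ hy

@[simp] lemma V_re (x y : ℝ) (hy : 0 < y) : (V x y hy).re = x := rfl
@[simp] lemma V_im (x y : ℝ) (hy : 0 < y) : (V x y hy).im = y := rfl

lemma V_ext {x y x' y' : ℝ} {hy hy'} (hx : x = x') (h : y = y') : V x y hy = V x' y' hy' := by
  subst hx; subst h; rfl

def Sc (k : ℝ) (hk : 0 < k) (z : ℍ) : ℍ := V (k * z.re) (k * z.im) (by have := z.im_pos; positivity)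

def Rf (z : ℍ) : ℍ := V (-z.re) z.im z.im_pos

def Inv (z : ℍ) : ℍ :=
  V (z.re / (z.re ^ 2 + z.im ^ 2)) (z.im / (z.re ^ 2 + z.im ^ 2))
    (by have := z.im_pos; positivity)

def Tr (t : ℝ) (z : ℍ) : ℍ := V (z.re + t) z.im z.im_pos

@[simp] lemma Sc_re (k hk) (z : ℍ) : (Sc k hk z).re = k * z.re := rfl
@[simp] lemma Sc_im (k hk) (z : ℍ) : (Sc k hk z).im = k * z.im := rfl
@[simp] lemma Rf_re (z : ℍ) : (Rf z).re = -z.re := rfl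
@[simp] lemma Rf_im (z : ℍ) : (Rf z).im = z.im := rfl
@[simp] lemma Inv_re (z : ℍ) : (Inv z).re = z.re / (z.re ^ 2 + z.im ^ 2) := rfl
@[simp] lemma Inv_im (z : ℍ) : (Inv z).im = z.im / (z.re ^ 2 + z.im ^ 2) := rfl
@[simp] lemma Tr_re (t) (z : ℍ) : (Tr t z).re = z.re + t := rfl
@[simp] lemma Tr_im (t) (z : ℍ) : (Tr t z).im = z.im := rfl

lemma hext {z w : ℍ} (hre : z.re = w.re) (him : z.im = w.im) : z = w :=
  UpperHalfPlane.ext' hre him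

lemma dist_Sc (k : ℝ) (hk : 0 < k) (z w : ℍ) : dist (Sc k hk z) (Sc k hk w) = dist z w := by
  apply dist_eq_of_cosh_eq dist_nonneg
  rw [cosh_dist', cosh_dist']
  have h1 := z.im_pos.ne'
  have h2 := w.im_pos.ne'
  simp only [Sc_re, Sc_im]
  field_simp

lemma dist_Rf (z w : ℍ) : dist (Rf z) (Rf w) = dist z w := by
  apply dist_eq_of_cosh_eq dist_nonneg
  rw [cosh_dist', cosh_dist']
  simp only [Rf_re, Rf_im]
  ring_nf

lemma dist_Tr (t : ℝ) (z w : ℍ) : dist (Tr t z) (Tr t w) = dist z w := by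
  apply dist_eq_of_cosh_eq dist_nonneg
  rw [cosh_dist', cosh_dist']
  simp only [Tr_re, Tr_im]
  ring_nf

lemma dist_Inv (z w : ℍ) : dist (Inv z) (Inv w) = dist z w := by
  apply dist_eq_of_cosh_eq dist_nonneg
  rw [cosh_dist', cosh_dist']
  have h1 := z.im_pos
  have h2 := w.im_pos
  have n1 : z.re ^ 2 + z.im ^ 2 ≠ 0 := by positivity
  have n2 : w.re ^ 2 + w.im ^ 2 ≠ 0 := by positivity
  simp only [Inv_re, Inv_im]
  field_simp
  ring

lemma Sc_Sc (k : ℝ) (hk : 0 < k) (z : ℍ) :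
    Sc k⁻¹ (inv_pos.2 hk) (Sc k hk z) = z := by
  apply hext <;> simp <;> field_simp

lemma Rf_Rf (z : ℍ) : Rf (Rf z) = z := by apply hext <;> simp

lemma Inv_Inv (z : ℍ) : Inv (Inv z) = z := by
  have h1 := z.im_pos
  have n1 : z.re ^ 2 + z.im ^ 2 ≠ 0 := by positivity
  have hM : (z.re / (z.re ^ 2 + z.im ^ 2)) ^ 2 + (z.im / (z.re ^ 2 + z.im ^ 2)) ^ 2
      = 1 / (z.re ^ 2 + z.im ^ 2) := by field_simp
  apply hext
  · simp only [Inv_re, Inv_im, hM]; field_simp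
  · simp only [Inv_re, Inv_im, hM]; field_simp

lemma Tr_Tr (t : ℝ) (z : ℍ) : Tr (-t) (Tr t z) = z := by apply hext <;> simp

lemma I_eq : UpperHalfPlane.I = V 0 1 one_pos := by apply hext <;> simp [V]

lemma Inv_I : Inv UpperHalfPlane.I = UpperHalfPlane.I := by
  apply hext <;> simp

/-! ### Vertical geodesics -/

lemma dist_V (x : ℝ) {y₁ y₂ : ℝ} (h1 : 0 < y₁) (h2 : 0 < y₂) :
    dist (V x y₁ h1) (V x y₂ h2) = |Real.log y₁ - Real.log y₂| := by
  rw [dist_of_re_eq (show (V x y₁ h1).re = (V x y₂ h2).re from rfl)]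
  simp [Real.dist_eq]

lemma vert_mem {x y₁ y y₂ : ℝ} {h1 : 0 < y₁} {h0 : 0 < y} {h2 : 0 < y₂}
    (ha : y₁ ≤ y) (hb : y ≤ y₂) : V x y h0 ∈ Seg (V x y₁ h1) (V x y₂ h2) := by
  have l1 : Real.log y₁ ≤ Real.log y := Real.log_le_log h1 ha
  have l2 : Real.log y ≤ Real.log y₂ := Real.log_le_log h0 hb
  simp only [Seg, Set.mem_setOf_eq, dist_V]
  rw [abs_of_nonpos (by linarith), abs_of_nonpos (by linarith), abs_of_nonpos (by linarith)]
  ring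

lemma cosh_dist_logs {y₁ y₂ : ℝ} (h1 : 0 < y₁) (h2 : 0 < y₂) :
    Real.cosh (dist (Real.log y₁) (Real.log y₂)) = (y₁ ^ 2 + y₂ ^ 2) / (2 * y₁ * y₂) := by
  rw [Real.dist_eq, Real.cosh_abs, ← Real.log_div h1.ne' h2.ne',
    Real.cosh_log (by positivity)]
  field_simp

lemma dist_log_im_lt {z w : ℍ} (h : z.re ≠ w.re) :
    dist (Real.log z.im) (Real.log w.im) < dist z w := by
  have h1 := z.im_pos
  have h2 := w.im_pos
  have hc : Real.cosh (dist (Real.log z.im) (Real.log w.im)) < Real.cosh (dist z w) := by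
    rw [cosh_dist_logs h1 h2, cosh_dist']
    have hre : 0 < (z.re - w.re) ^ 2 := pow_two_pos_of_ne_zero (sub_ne_zero.2 h)
    have : (0:ℝ) < 2 * z.im * w.im := by positivity
    rw [div_lt_div_iff₀ this this]
    nlinarith
  have := Real.cosh_lt_cosh.1 hc
  rwa [abs_of_nonneg dist_nonneg, abs_of_nonneg dist_nonneg] at this

lemma between_of_abs {u v t : ℝ} (h : |u - t| + |t - v| = |u - v|) :
    min u v ≤ t ∧ t ≤ max u v := by
  constructor
  · by_contra hc
    push_neg at hc
    have h1 : t < u := lt_of_lt_of_le hc (min_le_left _ _)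
    have h2 : t < v := lt_of_lt_of_le hc (min_le_right _ _)
    rw [abs_of_pos (by linarith : (0:ℝ) < u - t), abs_of_neg (by linarith : t - v < 0)] at h
    rcases abs_cases (u - v) with hh | hh <;> rw [hh.1] at h <;> linarith
  · by_contra hc
    push_neg at hc
    have h1 : u < t := lt_of_le_of_lt (le_max_left _ _) hc
    have h2 : v < t := lt_of_le_of_lt (le_max_right _ _) hc
    rw [abs_of_neg (by linarith : u - t < 0), abs_of_pos (by linarith : (0:ℝ) < t - v)] at h
    rcases abs_cases (u - v) with hh | hh <;> rw [hh.1] at h <;> linarith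

lemma seg_vert_char {a b z : ℍ} (ha : a.re = 0) (hb : b.re = 0) (hz : z ∈ Seg a b) :
    z.re = 0 ∧ min a.im b.im ≤ z.im ∧ z.im ≤ max a.im b.im := by
  have l1 : dist (Real.log a.im) (Real.log z.im) ≤ dist a z := dist_log_im_le a z
  have l2 : dist (Real.log z.im) (Real.log b.im) ≤ dist z b := dist_log_im_le z b
  have hab : dist a b = dist (Real.log a.im) (Real.log b.im) :=
    dist_of_re_eq (ha.trans hb.symm)
  have htri : dist (Real.log a.im) (Real.log b.im)
      ≤ dist (Real.log a.im) (Real.log z.im) + dist (Real.log z.im) (Real.log b.im) :=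
    dist_triangle _ _ _
  have hz' : dist a z + dist z b = dist a b := hz
  have e1 : dist (Real.log a.im) (Real.log z.im) = dist a z := by linarith
  have e2 : dist (Real.log z.im) (Real.log b.im) = dist z b := by linarith
  have hre : z.re = 0 := by
    by_contra hne
    have : dist (Real.log a.im) (Real.log z.im) < dist a z := by
      rw [dist_comm, UpperHalfPlane.dist_comm]
      exact dist_log_im_lt fun hh => hne (hh.trans ha)
    linarith
  refine ⟨hre, ?_⟩
  have heq : |Real.log a.im - Real.log z.im| + |Real.log z.im - Real.log b.im|
      = |Real.log a.im - Real.log b.im| := by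
    rw [← Real.dist_eq, ← Real.dist_eq, ← Real.dist_eq, e1, e2, ← hab]
    exact hz'
  obtain ⟨hm, hM⟩ := between_of_abs heq
  constructor
  · rcases le_total a.im b.im with hh | hh
    · have : min (Real.log a.im) (Real.log b.im) = Real.log a.im := by
        simp [min_eq_left (Real.log_le_log a.im_pos hh)]
      rw [this] at hm
      have := (Real.log_le_log_iff a.im_pos z.im_pos).1 hm
      simpa [min_eq_left hh] using this
    · have : min (Real.log a.im) (Real.log b.im) = Real.log b.im := by
        simp [min_eq_right (Real.log_le_log b.im_pos hh)]
      rw [this] at hm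
      have := (Real.log_le_log_iff b.im_pos z.im_pos).1 hm
      simpa [min_eq_right hh] using this
  · rcases le_total a.im b.im with hh | hh
    · have : max (Real.log a.im) (Real.log b.im) = Real.log b.im := by
        simp [max_eq_right (Real.log_le_log a.im_pos hh)]
      rw [this] at hM
      have := (Real.log_le_log_iff z.im_pos b.im_pos).1 hM
      simpa [max_eq_right hh] using this
    · have : max (Real.log a.im) (Real.log b.im) = Real.log a.im := by
        simp [max_eq_left (Real.log_le_log b.im_pos hh)]
      rw [this] at hM
      have := (Real.log_le_log_iff z.im_pos a.im_pos).1 hM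
      simpa [max_eq_left hh] using this

/-! ### Semicircle geodesics -/

def Arc (m r : ℝ) (hr : 0 < r) (s : ℝ) : ℍ :=
  V (m + r * (Real.sinh s / Real.cosh s)) (r / Real.cosh s)
    (div_pos hr (Real.cosh_pos s))

@[simp] lemma Arc_re (m r hr s) : (Arc m r hr s).re = m + r * (Real.sinh s / Real.cosh s) := rfl
@[simp] lemma Arc_im (m r hr s) : (Arc m r hr s).im = r / Real.cosh s := rfl

lemma dist_Arc (m r : ℝ) (hr : 0 < r) (s t : ℝ) :
    dist (Arc m r hr s) (Arc m r hr t) = |s - t| := by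
  apply dist_eq_of_cosh_eq (abs_nonneg _)
  rw [cosh_dist', Real.cosh_abs, Real.cosh_sub]
  have hcs := Real.cosh_pos s
  have hct := Real.cosh_pos t
  have hps := Real.cosh_sq_sub_sinh_sq s
  have hpt := Real.cosh_sq_sub_sinh_sq t
  simp only [Arc_re, Arc_im]
  field_simp
  linear_combination (-(Real.cosh t ^ 2 * r ^ 2)) * hps + (-(Real.cosh s ^ 2 * r ^ 2)) * hpt

lemma Arc_eq {m r : ℝ} (hr : 0 < r) (z : ℍ) (hz : (z.re - m) ^ 2 + z.im ^ 2 = r ^ 2) :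
    Arc m r hr (Real.arsinh ((z.re - m) / z.im)) = z := by
  have him := z.im_pos
  have hcosh : Real.cosh (Real.arsinh ((z.re - m) / z.im)) = r / z.im := by
    rw [Real.cosh_arsinh,
      show (1 : ℝ) + ((z.re - m) / z.im) ^ 2 = (r / z.im) ^ 2 by field_simp; linarith,
      Real.sqrt_sq (by positivity)]
  apply hext
  · simp only [Arc_re, Real.sinh_arsinh, hcosh]
    field_simp
    ring
  · simp only [Arc_im, hcosh]
    field_simp

lemma tanh_le_tanh_iff {s t : ℝ} :
    Real.sinh s / Real.cosh s ≤ Real.sinh t / Real.cosh t ↔ s ≤ t := by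
  rw [div_le_div_iff₀ (Real.cosh_pos s) (Real.cosh_pos t)]
  constructor
  · intro h2
    have h3 : Real.sinh (s - t) ≤ Real.sinh 0 := by
      rw [Real.sinh_zero, Real.sinh_sub]; linarith
    have := Real.sinh_le_sinh.1 h3
    linarith
  · intro h2
    have h3 : Real.sinh (s - t) ≤ Real.sinh 0 := Real.sinh_le_sinh.2 (by linarith)
    rw [Real.sinh_zero, Real.sinh_sub] at h3
    linarith

lemma Arc_re_le_iff {m r : ℝ} (hr : 0 < r) {s t : ℝ} :
    (Arc m r hr s).re ≤ (Arc m r hr t).re ↔ s ≤ t := by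
  simp only [Arc_re, add_le_add_iff_left]
  rw [mul_le_mul_iff_right₀ hr]
  exact tanh_le_tanh_iff

lemma Arc_mem_seg {m r : ℝ} (hr : 0 < r) {s u t : ℝ} (h1 : s ≤ u) (h2 : u ≤ t) :
    Arc m r hr u ∈ Seg (Arc m r hr s) (Arc m r hr t) := by
  simp only [Seg, Set.mem_setOf_eq, dist_Arc]
  rw [abs_of_nonpos (by linarith), abs_of_nonpos (by linarith), abs_of_nonpos (by linarith)]
  ring

/-! ### The key estimate -/

set_option maxHeartbeats 1000000 in
lemma key {q x₀ y₀ : ℝ} (hq : 1 ≤ q) (hx₀ : 0 < x₀) (hy₀ : 0 < y₀)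
    (hcirc : x₀ ^ 2 + y₀ ^ 2 = 1) :
    ∃ w : ℍ, w ∈ Seg (V 0 q (lt_of_lt_of_le one_pos hq)) (V x₀ y₀ hy₀) ∧
      dist UpperHalfPlane.I w ≤ Real.log (1 + √2) := by
  have hq0 : 0 < q := lt_of_lt_of_le one_pos hq
  by_cases hsmall : q ≤ 1 + √2
  · refine ⟨_, left_mem_seg _ _, ?_⟩
    rw [I_eq, dist_V, Real.log_one, zero_sub, abs_neg, abs_of_nonneg (Real.log_nonneg hq)]
    exact Real.log_le_log hq0 hsmall
  push_neg at hsmall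
  have hs2 : (√2 : ℝ) ^ 2 = 2 := Real.sq_sqrt (by norm_num)
  have hsqrt2pos : (0:ℝ) < √2 := Real.sqrt_pos.2 (by norm_num)
  have hq2 : 2 < q ^ 2 := by
    have h1 : √2 < q := by linarith
    have h := mul_lt_mul'' h1 h1 hsqrt2pos.le hsqrt2pos.le
    nlinarith [h, hs2]
  have hx1 : x₀ ≤ 1 := by
    by_contra hc
    push_neg at hc
    have h1 : (1:ℝ) < x₀ ^ 2 := by nlinarith
    have h2 : (0:ℝ) < y₀ ^ 2 := pow_pos hy₀ 2
    linarith
  set m : ℝ := (1 - q ^ 2) / (2 * x₀) with hm_def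
  have hmx0 : 2 * m * x₀ = 1 - q ^ 2 := by
    rw [hm_def]; field_simp
  have hm_neg : m < 0 := by
    rw [hm_def]
    apply div_neg_of_neg_of_pos (by nlinarith) (by positivity)
  clear_value m
  set r : ℝ := √(m ^ 2 + q ^ 2) with hr_def
  set n : ℝ := √(m ^ 2 + 2) with hn_def
  have hr2 : r ^ 2 = m ^ 2 + q ^ 2 := Real.sq_sqrt (by positivity)
  have hn2 : n ^ 2 = m ^ 2 + 2 := Real.sq_sqrt (by positivity)
  have hr : 0 < r := Real.sqrt_pos.2 (by positivity)
  have hn : 0 < n := Real.sqrt_pos.2 (by positivity)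
  have f1 : n < r := by
    rw [hr_def, hn_def]
    exact Real.sqrt_lt_sqrt (by positivity) (by nlinarith)
  clear_value r n
  have hnm : -m ≤ n := by
    by_contra hc
    push_neg at hc
    have := pow_le_pow_left₀ hn.le hc.le 2
    nlinarith [hn2]
  have hrm : -m ≤ r := by
    by_contra hc
    push_neg at hc
    have := pow_le_pow_left₀ hr.le hc.le 2
    nlinarith [hr2]
  have h2n : q ^ 2 - 1 ≤ 2 * n := by
    have h3 : (-2 * m) * x₀ ≤ (-2 * m) * 1 := by
      apply mul_le_mul_of_nonneg_left hx1 (by linarith)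
    nlinarith [hmx0, hnm]
  have hrn1 : r ≤ n + 1 := by
    have hexp : (n + 1) ^ 2 = n ^ 2 + 2 * n + 1 := by ring
    have hsq : r ^ 2 < (n + 1) ^ 2 := by linarith [h2n, hr2, hn2, hexp]
    have := lt_of_pow_lt_pow_left₀ 2 (by linarith : (0:ℝ) ≤ n + 1) hsq
    linarith
  -- the point w*
  have hwim : 0 < √2 * r / n := by positivity
  set wre : ℝ := m * (1 - r / n) with hwre_def
  have h1rn : 1 - r / n < 0 := by
    rw [sub_neg]
    exact (one_lt_div hn).2 f1
  have hw_nonneg : 0 ≤ wre := le_of_lt (mul_pos_of_neg_of_neg hm_neg h1rn)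
  clear_value wre
  have e1 : (r - n) * (r + n) = q ^ 2 - 2 := by linear_combination hr2 - hn2
  have e2 : 2 * m ^ 2 ≤ n * (r + n) := by
    have h4 : (-m) * (-m) ≤ n * r := mul_le_mul hnm hrm (by linarith) hn.le
    nlinarith [hn2]
  have hw_eq : wre = (-m) * (r - n) / n := by
    rw [hwre_def]; field_simp; ring
  have hw_le : wre ≤ x₀ := by
    rw [hw_eq, div_le_iff₀ hn]
    have h6 : x₀ * (2 * m ^ 2) ≤ x₀ * (n * (r + n)) := mul_le_mul_of_nonneg_left e2 hx₀.le
    have h7 : x₀ * (2 * m ^ 2) = (-m) * (q ^ 2 - 1) := by linear_combination m * hmx0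
    have h8 : (-m) * (q ^ 2 - 2) ≤ (-m) * (q ^ 2 - 1) := by nlinarith [hm_neg]
    have h9 : ((-m) * (r - n)) * (r + n) = (-m) * (q ^ 2 - 2) := by
      linear_combination (-m) * e1
    have h10 : ((-m) * (r - n)) * (r + n) ≤ (x₀ * n) * (r + n) := by
      rw [h9]
      calc (-m) * (q ^ 2 - 2) ≤ (-m) * (q ^ 2 - 1) := h8
        _ = x₀ * (2 * m ^ 2) := h7.symm
        _ ≤ x₀ * (n * (r + n)) := h6
        _ = (x₀ * n) * (r + n) := by ring
    exact (mul_le_mul_iff_left₀ (by linarith : (0:ℝ) < r + n)).1 h10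
  set wstar : ℍ := V wre (√2 * r / n) hwim with hwstar_def
  -- distance estimate
  have hsinh : Real.sinh (Real.log (1 + √2)) = 1 := by rw [delta_eq, Real.sinh_arsinh]
  have hcosh : Real.cosh (Real.log (1 + √2)) = √2 := by
    rw [delta_eq, Real.cosh_arsinh]; norm_num
  have hdist_center : dist (wstar : ℂ) ((UpperHalfPlane.I).center (Real.log (1 + √2))) = r - n := by
    rw [Complex.dist_eq_re_im]
    have hco : ((wstar : ℂ).re - ((((UpperHalfPlane.I).center (Real.log (1 + √2))) : ℍ) : ℂ).re) ^ 2 +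
        ((wstar : ℂ).im - ((((UpperHalfPlane.I).center (Real.log (1 + √2))) : ℍ) : ℂ).im) ^ 2
        = (r - n) ^ 2 := by
      simp only [UpperHalfPlane.coe_re, UpperHalfPlane.coe_im]
      rw [center_re, center_im, hcosh]
      have hre' : wstar.re = wre := rfl
      have him' : wstar.im = √2 * r / n := rfl
      have hIre : (UpperHalfPlane.I).re = 0 := by simp
      have hIim : (UpperHalfPlane.I).im = 1 := rfl
      rw [hre', him', hIre, hIim, hwre_def]
      field_simp
      linear_combination ((n - r) ^ 2) * hs2 - ((n - r) ^ 2) * hn2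
    rw [hco, Real.sqrt_sq (by linarith)]
  have hdist_le : dist UpperHalfPlane.I wstar ≤ Real.log (1 + √2) := by
    rw [UpperHalfPlane.dist_comm, dist_le_iff_dist_coe_center_le, hdist_center, hsinh]
    have hIim : (UpperHalfPlane.I).im = 1 := rfl
    rw [hIim]
    linarith
  -- membership
  have circB : ((V 0 q hq0).re - m) ^ 2 + (V 0 q hq0).im ^ 2 = r ^ 2 := by
    simp only [V_re, V_im]
    linear_combination -hr2
  have circW : ((V x₀ y₀ hy₀).re - m) ^ 2 + (V x₀ y₀ hy₀).im ^ 2 = r ^ 2 := by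
    simp only [V_re, V_im]
    linear_combination -hr2 + hcirc - hmx0
  have circS : (wstar.re - m) ^ 2 + wstar.im ^ 2 = r ^ 2 := by
    have hre' : wstar.re = wre := rfl
    have him' : wstar.im = √2 * r / n := rfl
    rw [hre', him', hwre_def]
    field_simp
    linear_combination (r ^ 2) * hs2 - (r ^ 2) * hn2
  have eB := Arc_eq hr (V 0 q hq0) circB
  have eW := Arc_eq hr (V x₀ y₀ hy₀) circW
  have eS := Arc_eq hr wstar circS
  set sB := Real.arsinh (((V 0 q hq0).re - m) / (V 0 q hq0).im) with hsB
  set sW := Real.arsinh (((V x₀ y₀ hy₀).re - m) / (V x₀ y₀ hy₀).im) with hsW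
  set sS := Real.arsinh ((wstar.re - m) / wstar.im) with hsS
  have hord1 : sB ≤ sS := by
    rw [← Arc_re_le_iff (m := m) hr (s := sB) (t := sS), eB, eS]
    show (0:ℝ) ≤ wstar.re
    exact hw_nonneg
  have hord2 : sS ≤ sW := by
    rw [← Arc_re_le_iff (m := m) hr (s := sS) (t := sW), eS, eW]
    exact hw_le
  have hmem := Arc_mem_seg (m := m) hr hord1 hord2
  rw [eB, eW, eS] at hmem
  exact ⟨wstar, hmem, hdist_le⟩

/-! ### Main lemma in normalized position -/

set_option maxHeartbeats 1000000 in
lemma main_norm {p q : ℝ} (hp : 0 < p) (hp1 : p ≤ 1) (hq : 1 ≤ q) (c : ℍ) (hc : 0 ≤ c.re) :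
    ∃ w : ℍ, w ∈ Seg (V 0 p hp) c ∪ Seg c (V 0 q (lt_of_lt_of_le one_pos hq)) ∧
      dist UpperHalfPlane.I w ≤ Real.log (1 + √2) := by
  have hq0 : 0 < q := lt_of_lt_of_le one_pos hq
  have hceq : c = V c.re c.im c.im_pos := hext rfl rfl
  rcases eq_or_lt_of_le hc with hre0 | hrepos
  · -- c is on the imaginary axis
    rcases le_total c.im 1 with hle | hge
    · refine ⟨UpperHalfPlane.I, Or.inr ?_, by simp [delta_nonneg]⟩
      rw [I_eq]
      nth_rewrite 1 [hceq]
      rw [show V c.re c.im c.im_pos = V 0 c.im c.im_pos from by rw [← hre0]]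
      exact vert_mem hle hq
    · refine ⟨UpperHalfPlane.I, Or.inl ?_, by simp [delta_nonneg]⟩
      rw [I_eq]
      nth_rewrite 1 [hceq]
      rw [show V c.re c.im c.im_pos = V 0 c.im c.im_pos from by rw [← hre0]]
      exact vert_mem hp1 hge
  · -- c is off the axis
    by_cases hNc : 1 ≤ c.re ^ 2 + c.im ^ 2
    · -- the crossing happens on `Seg a c`
      set m₁ : ℝ := (c.re ^ 2 + c.im ^ 2 - p ^ 2) / (2 * c.re) with hm₁def
      have hm₁ : 2 * m₁ * c.re = c.re ^ 2 + c.im ^ 2 - p ^ 2 := by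
        rw [hm₁def]; field_simp
      clear_value m₁
      have hr₁pos : (0:ℝ) < (0 - m₁) ^ 2 + p ^ 2 := by positivity
      set r₁ : ℝ := √((0 - m₁) ^ 2 + p ^ 2) with hr₁def
      have hr₁2 : r₁ ^ 2 = (0 - m₁) ^ 2 + p ^ 2 := Real.sq_sqrt hr₁pos.le
      have hr₁ : 0 < r₁ := Real.sqrt_pos.2 hr₁pos
      clear_value r₁
      have circa : ((V 0 p hp).re - m₁) ^ 2 + (V 0 p hp).im ^ 2 = r₁ ^ 2 := by
        simp only [V_re, V_im]; linear_combination -hr₁2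
      have circc : (c.re - m₁) ^ 2 + c.im ^ 2 = r₁ ^ 2 := by
        linear_combination -hr₁2 - hm₁
      have eA := Arc_eq hr₁ (V 0 p hp) circa
      have eC := Arc_eq hr₁ c circc
      set sA := Real.arsinh (((V 0 p hp).re - m₁) / (V 0 p hp).im) with hsA
      set sC := Real.arsinh ((c.re - m₁) / c.im) with hsC
      have hsAC : sA ≤ sC := by
        rw [← Arc_re_le_iff (m := m₁) hr₁ (s := sA) (t := sC), eA, eC]
        simpa using hc
      set F : ℝ → ℝ := fun s => (Arc m₁ r₁ hr₁ s).re ^ 2 + (Arc m₁ r₁ hr₁ s).im ^ 2 with hF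
      have hcont : Continuous F := by
        rw [hF]
        simp only [Arc_re, Arc_im]
        apply Continuous.add
        · apply Continuous.pow
          exact continuous_const.add (continuous_const.mul
            (Real.continuous_sinh.div Real.continuous_cosh fun x => (Real.cosh_pos x).ne'))
        · exact (continuous_const.div Real.continuous_cosh fun x => (Real.cosh_pos x).ne').pow 2
      have hFA : F sA = p ^ 2 := by rw [hF]; simp only [eA, V_re, V_im]; norm_num
      have hFC : F sC = c.re ^ 2 + c.im ^ 2 := by rw [hF]; simp only [eC]
      have hmem1 : (1:ℝ) ∈ Set.Icc (F sA) (F sC) := by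
        rw [hFA, hFC]
        constructor
        · nlinarith
        · exact hNc
      obtain ⟨s₀, hs₀, hFs₀⟩ := intermediate_value_Icc hsAC hcont.continuousOn hmem1
      set w₀ := Arc m₁ r₁ hr₁ s₀ with hw₀
      have hxy : w₀.re ^ 2 + w₀.im ^ 2 = 1 := hFs₀
      have hx₀0 : 0 ≤ w₀.re := by
        have := (Arc_re_le_iff (m := m₁) hr₁ (s := sA) (t := s₀)).2 hs₀.1
        rw [eA] at this
        simpa [hw₀] using this
      have hw₀mem : w₀ ∈ Seg (V 0 p hp) c := by
        have := Arc_mem_seg (m := m₁) hr₁ hs₀.1 hs₀.2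
        rwa [eA, eC] at this
      rcases eq_or_lt_of_le hx₀0 with hx₀ | hx₀
      · -- the crossing point is I itself
        have hy1 : w₀.im = 1 := by
          rcases mul_self_eq_one_iff.1 (by nlinarith [hxy] : w₀.im * w₀.im = 1) with h1 | h1
          · exact h1
          · nlinarith [w₀.im_pos]
        have hwI : w₀ = UpperHalfPlane.I := hext (by rw [← hx₀]; rfl) (by rw [hy1]; rfl)
        refine ⟨w₀, Or.inl hw₀mem, ?_⟩
        rw [hwI]
        simp [delta_nonneg]
      · -- apply inversion and the key lemma
        have hpinv : 1 ≤ p⁻¹ := (one_le_inv₀ hp).mpr hp1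
        have hIa : Inv (V 0 p hp) = V 0 p⁻¹ (lt_of_lt_of_le one_pos hpinv) := by
          apply hext
          · simp
          · simp only [Inv_im, V_re, V_im]
            rw [show (0:ℝ) ^ 2 + p ^ 2 = p ^ 2 by ring, pow_two]
            field_simp
        have hIw₀ : Inv w₀ = w₀ := by
          apply hext
          · simp only [Inv_re, hxy]; simp
          · simp only [Inv_im, hxy]; simp
        obtain ⟨w₁, hw₁mem, hw₁dist⟩ := key hpinv hx₀ w₀.im_pos hxy
        have hVw₀ : V w₀.re w₀.im w₀.im_pos = w₀ := hext rfl rfl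
        rw [hVw₀] at hw₁mem
        have h2 : Inv w₁ ∈ Seg (Inv (V 0 p⁻¹ (lt_of_lt_of_le one_pos hpinv))) (Inv w₀) :=
          seg_map dist_Inv hw₁mem
        rw [← hIa, Inv_Inv, hIw₀] at h2
        have h3 : Inv w₁ ∈ Seg (V 0 p hp) c := seg_trans hw₀mem h2
        refine ⟨Inv w₁, Or.inl h3, ?_⟩
        rw [← Inv_I, dist_Inv]
        exact hw₁dist
    · -- the crossing happens on `Seg c b`
      push_neg at hNc
      set m₂ : ℝ := (c.re ^ 2 + c.im ^ 2 - q ^ 2) / (2 * c.re) with hm₂def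
      have hm₂ : 2 * m₂ * c.re = c.re ^ 2 + c.im ^ 2 - q ^ 2 := by
        rw [hm₂def]; field_simp
      clear_value m₂
      have hr₂pos : (0:ℝ) < (0 - m₂) ^ 2 + q ^ 2 := by positivity
      set r₂ : ℝ := √((0 - m₂) ^ 2 + q ^ 2) with hr₂def
      have hr₂2 : r₂ ^ 2 = (0 - m₂) ^ 2 + q ^ 2 := Real.sq_sqrt hr₂pos.le
      have hr₂ : 0 < r₂ := Real.sqrt_pos.2 hr₂pos
      clear_value r₂
      have circb : ((V 0 q hq0).re - m₂) ^ 2 + (V 0 q hq0).im ^ 2 = r₂ ^ 2 := by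
        simp only [V_re, V_im]; linear_combination -hr₂2
      have circc : (c.re - m₂) ^ 2 + c.im ^ 2 = r₂ ^ 2 := by
        linear_combination -hr₂2 - hm₂
      have eB := Arc_eq hr₂ (V 0 q hq0) circb
      have eC := Arc_eq hr₂ c circc
      set sB := Real.arsinh (((V 0 q hq0).re - m₂) / (V 0 q hq0).im) with hsB
      set sC := Real.arsinh ((c.re - m₂) / c.im) with hsC
      have hsBC : sB ≤ sC := by
        rw [← Arc_re_le_iff (m := m₂) hr₂ (s := sB) (t := sC), eB, eC]
        simpa using hc
      set F : ℝ → ℝ := fun s => (Arc m₂ r₂ hr₂ s).re ^ 2 + (Arc m₂ r₂ hr₂ s).im ^ 2 with hF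
      have hcont : Continuous F := by
        rw [hF]
        simp only [Arc_re, Arc_im]
        apply Continuous.add
        · apply Continuous.pow
          exact continuous_const.add (continuous_const.mul
            (Real.continuous_sinh.div Real.continuous_cosh fun x => (Real.cosh_pos x).ne'))
        · exact (continuous_const.div Real.continuous_cosh fun x => (Real.cosh_pos x).ne').pow 2
      have hFB : F sB = q ^ 2 := by rw [hF]; simp only [eB, V_re, V_im]; norm_num
      have hFC : F sC = c.re ^ 2 + c.im ^ 2 := by rw [hF]; simp only [eC]
      have hmem1 : (1:ℝ) ∈ Set.Icc (F sC) (F sB) := by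
        rw [hFB, hFC]
        constructor
        · exact hNc.le
        · nlinarith
      obtain ⟨s₀, hs₀, hFs₀⟩ := intermediate_value_Icc' hsBC hcont.continuousOn hmem1
      set w₀ := Arc m₂ r₂ hr₂ s₀ with hw₀
      have hxy : w₀.re ^ 2 + w₀.im ^ 2 = 1 := hFs₀
      have hx₀0 : 0 ≤ w₀.re := by
        have := (Arc_re_le_iff (m := m₂) hr₂ (s := sB) (t := s₀)).2 hs₀.1
        rw [eB] at this
        simpa [hw₀] using this
      have hw₀mem : w₀ ∈ Seg (V 0 q hq0) c := by
        have := Arc_mem_seg (m := m₂) hr₂ hs₀.1 hs₀.2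
        rwa [eB, eC] at this
      rcases eq_or_lt_of_le hx₀0 with hx₀ | hx₀
      · have hy1 : w₀.im = 1 := by
          rcases mul_self_eq_one_iff.1 (by nlinarith [hxy] : w₀.im * w₀.im = 1) with h1 | h1
          · exact h1
          · nlinarith [w₀.im_pos]
        have hwI : w₀ = UpperHalfPlane.I := hext (by rw [← hx₀]; rfl) (by rw [hy1]; rfl)
        refine ⟨w₀, Or.inr ?_, ?_⟩
        · rw [seg_comm]; exact hw₀mem
        · rw [hwI]; simp [delta_nonneg]
      · obtain ⟨w₁, hw₁mem, hw₁dist⟩ := key hq hx₀ w₀.im_pos hxy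
        have hVw₀ : V w₀.re w₀.im w₀.im_pos = w₀ := hext rfl rfl
        rw [hVw₀] at hw₁mem
        have h3 : w₁ ∈ Seg (V 0 q hq0) c := by
          apply seg_trans hw₀mem
          convert hw₁mem using 3
        refine ⟨w₁, Or.inr ?_, hw₁dist⟩
        rw [seg_comm]
        exact h3

/-! ### Pullback along isometries -/

lemma pullback {D : ℝ} {f g : ℍ → ℍ} (hg : ∀ z w, dist (g z) (g w) = dist z w)
    (hgf : ∀ z, g (f z) = z) (a b c z : ℍ)
    (h : ∃ w', w' ∈ Seg (f a) (f c) ∪ Seg (f c) (f b) ∧ dist (f z) w' ≤ D) :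
    ∃ w, w ∈ Seg a c ∪ Seg c b ∧ dist z w ≤ D := by
  obtain ⟨w', hw', hd⟩ := h
  refine ⟨g w', ?_, ?_⟩
  · rcases hw' with h1 | h1
    · left
      have := seg_map hg h1
      rwa [hgf, hgf] at this
    · right
      have := seg_map hg h1
      rwa [hgf, hgf] at this
  · calc dist z (g w') = dist (g (f z)) (g w') := by rw [hgf]
      _ = dist (f z) w' := hg _ _
      _ ≤ D := hd

lemma union_swap (a b c : ℍ) : Seg b c ∪ Seg c a = Seg a c ∪ Seg c b := by
  rw [seg_comm b c, seg_comm c a]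
  exact Set.union_comm _ _

/-! ### Reduction to normalized position -/

lemma main_axis_ord (a b c z : ℍ) (ha : a.re = 0) (hb : b.re = 0) (hab : a.im ≤ b.im)
    (hz : z ∈ Seg a b) :
    ∃ w, w ∈ Seg a c ∪ Seg c b ∧ dist z w ≤ Real.log (1 + √2) := by
  obtain ⟨hzre, hzm, hzM⟩ := seg_vert_char ha hb hz
  rw [min_eq_left hab] at hzm
  rw [max_eq_right hab] at hzM
  set k : ℝ := (z.im)⁻¹ with hk_def
  have hk : 0 < k := inv_pos.2 z.im_pos
  have hkz : k * z.im = 1 := inv_mul_cancel₀ z.im_pos.ne'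
  have hp : 0 < k * a.im := by positivity
  have hq' : 0 < k * b.im := by positivity
  have hp1 : k * a.im ≤ 1 := by
    rw [← hkz]
    exact mul_le_mul_of_nonneg_left hzm hk.le
  have hq1 : 1 ≤ k * b.im := by
    rw [← hkz]
    exact mul_le_mul_of_nonneg_left hzM hk.le
  have hSz : Sc k hk z = UpperHalfPlane.I := by
    rw [I_eq]
    exact hext (by simp [hzre]) (by simpa using hkz)
  have hSa : V 0 (k * a.im) hp = Sc k hk a := hext (by simp [ha]) rfl
  have hSb : V 0 (k * b.im) hq' = Sc k hk b := hext (by simp [hb]) rfl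
  have hgf : ∀ y, Sc k⁻¹ (inv_pos.2 hk) (Sc k hk y) = y := fun y => Sc_Sc k hk y
  apply pullback (fun y w => dist_Sc k⁻¹ (inv_pos.2 hk) y w) hgf
  rcases le_or_gt 0 c.re with hcre | hcre
  · -- no reflection needed
    have hc2 : 0 ≤ (Sc k hk c).re := by
      simp only [Sc_re]
      positivity
    obtain ⟨w', hw', hd⟩ := main_norm hp hp1 hq1 (Sc k hk c) hc2
    rw [hSa, hSb, hSz] at *
    exact ⟨w', by rwa [hSa, hSb] at hw', by rwa [hSz] at hd⟩
  · -- reflect first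
    have hc3 : 0 ≤ (Rf (Sc k hk c)).re := by
      simp only [Rf_re, Sc_re]
      nlinarith
    obtain ⟨w', hw', hd⟩ := main_norm hp hp1 hq1 (Rf (Sc k hk c)) hc3
    -- pull back through the reflection
    have hRa : Rf (V 0 (k * a.im) hp) = V 0 (k * a.im) hp := hext (by simp) rfl
    have hRb : Rf (V 0 (k * b.im) hq') = V 0 (k * b.im) hq' := hext (by simp) rfl
    have hRI : Rf UpperHalfPlane.I = UpperHalfPlane.I := by
      apply hext
      · simp
      · rfl
    refine ⟨Rf w', ?_, ?_⟩
    · rcases hw' with h1 | h1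
      · left
        have h4 := seg_map dist_Rf h1
        rw [hRa, Rf_Rf, hSa] at h4
        exact h4
      · right
        have h4 := seg_map dist_Rf h1
        rw [hRb, Rf_Rf, hSb] at h4
        exact h4
    · rw [hSz, ← hRI, dist_Rf]
      exact hd

lemma main_axis (a b c z : ℍ) (ha : a.re = 0) (hb : b.re = 0) (hz : z ∈ Seg a b) :
    ∃ w, w ∈ Seg a c ∪ Seg c b ∧ dist z w ≤ Real.log (1 + √2) := by
  rcases le_total a.im b.im with h | h
  · exact main_axis_ord a b c z ha hb h hz
  · have hz' : z ∈ Seg b a := by rw [seg_comm]; exact hz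
    obtain ⟨w, hw, hd⟩ := main_axis_ord b a c z hb ha h hz'
    rw [union_swap] at hw
    exact ⟨w, hw, hd⟩

/-! ### Moving an arbitrary pair of points to the imaginary axis -/

lemma comp_re (β r : ℝ) (h2r : 0 < 2 * r) (w : ℍ) :
    (Tr (-1) (Sc (2 * r) h2r (Inv (Rf (Tr (-β) w))))).re
      = 2 * r * ((β - w.re) / ((β - w.re) ^ 2 + w.im ^ 2)) - 1 := by
  simp only [Tr_re, Sc_re, Inv_re, Rf_re, Rf_im, Tr_im]
  ring_nf

lemma normalize (a b : ℍ) : ∃ f g : ℍ → ℍ,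
    (∀ z w, dist (g z) (g w) = dist z w) ∧ (∀ z w, dist (f z) (f w) = dist z w) ∧
    (∀ z, g (f z) = z) ∧ (f a).re = 0 ∧ (f b).re = 0 := by
  rcases eq_or_ne a.re b.re with hre | hre
  · refine ⟨Tr (-a.re), Tr a.re, fun z w => dist_Tr _ z w, fun z w => dist_Tr _ z w,
      fun z => by simpa using Tr_Tr (-a.re) z, by simp, by simp [← hre]⟩
  · set m : ℝ := (a.re ^ 2 + a.im ^ 2 - b.re ^ 2 - b.im ^ 2) / (2 * (a.re - b.re)) with hm_def
    have hm : 2 * m * (a.re - b.re) = a.re ^ 2 + a.im ^ 2 - b.re ^ 2 - b.im ^ 2 := by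
      rw [hm_def]
      field_simp [sub_ne_zero.2 hre]
    clear_value m
    have hrpos : (0:ℝ) < (a.re - m) ^ 2 + a.im ^ 2 := by
      have := a.im_pos
      positivity
    set r : ℝ := √((a.re - m) ^ 2 + a.im ^ 2) with hr_def
    have hr2 : r ^ 2 = (a.re - m) ^ 2 + a.im ^ 2 := Real.sq_sqrt hrpos.le
    have hr : 0 < r := Real.sqrt_pos.2 hrpos
    clear_value r
    have circa : (a.re - m) ^ 2 + a.im ^ 2 = r ^ 2 := hr2.symm
    have circb : (b.re - m) ^ 2 + b.im ^ 2 = r ^ 2 := by linear_combination circa + hm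
    have h2r : 0 < 2 * r := by linarith
    refine ⟨fun w => Tr (-1) (Sc (2 * r) h2r (Inv (Rf (Tr (-(m + r)) w)))),
      fun w => Tr (m + r) (Rf (Inv (Sc (2 * r)⁻¹ (inv_pos.2 h2r) (Tr 1 w)))), ?_, ?_, ?_, ?_, ?_⟩
    · intro z w
      rw [dist_Tr, dist_Rf, dist_Inv, dist_Sc, dist_Tr]
    · intro z w
      rw [dist_Tr, dist_Sc, dist_Inv, dist_Rf, dist_Tr]
    · intro z
      beta_reduce
      rw [show Tr 1 (Tr (-1) (Sc (2 * r) h2r (Inv (Rf (Tr (-(m + r)) z)))))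
          = Sc (2 * r) h2r (Inv (Rf (Tr (-(m + r)) z))) from by simpa using Tr_Tr (-1) _,
        Sc_Sc, Inv_Inv, Rf_Rf]
      simpa using Tr_Tr (-(m + r)) z
    · rw [comp_re]
      have hNa : ((m + r) - a.re) ^ 2 + a.im ^ 2 = 2 * r * ((m + r) - a.re) := by
        linear_combination circa
      rw [hNa, div_mul_eq_div_div_swap]
      have hpos : (0:ℝ) < (m + r - a.re) ^ 2 + a.im ^ 2 := by
        have := a.im_pos
        positivity
      rw [hNa] at hpos
      have h1 : ((m + r) - a.re) ≠ 0 := by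
        intro h0
        rw [h0] at hpos
        simp at hpos
      rw [div_self h1]
      have h2 : (2 * r) ≠ 0 := by linarith
      field_simp
      ring
    · rw [comp_re]
      have hNb : ((m + r) - b.re) ^ 2 + b.im ^ 2 = 2 * r * ((m + r) - b.re) := by
        linear_combination circb
      rw [hNb, div_mul_eq_div_div_swap]
      have hpos : (0:ℝ) < (m + r - b.re) ^ 2 + b.im ^ 2 := by
        have := b.im_pos
        positivity
      rw [hNb] at hpos
      have h1 : ((m + r) - b.re) ≠ 0 := by
        intro h0
        rw [h0] at hpos
        simp at hpos
      rw [div_self h1]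
      field_simp
      ring

end ThinAux

/-- Every geodesic triangle in the hyperbolic plane is `ln(1+√2)`-thin: each side lies in
the closed `ln(1+√2)`-neighborhood of the union of the other two sides. -/
theorem stmt13 (a b c : ℍ) (z : ℍ) (hz : z ∈ Seg a b) :
    Metric.infDist z (Seg a c ∪ Seg c b) ≤ Real.log (1 + Real.sqrt 2) := by
  obtain ⟨f, g, hg, hf, hgf, ha0, hb0⟩ := ThinAux.normalize a b
  have hmain := ThinAux.main_axis (f a) (f b) (f c) (f z) ha0 hb0 (ThinAux.seg_map hf hz)
  obtain ⟨w, hw, hd⟩ := ThinAux.pullback hg hgf a b c z hmain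
  calc Metric.infDist z (Seg a c ∪ Seg c b) ≤ dist z w := Metric.infDist_le_dist_of_mem hw
    _ ≤ Real.log (1 + Real.sqrt 2) := hd
end
end
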